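/- Let n ≥ 1, let Ω ⊆ ℂⁿ be a bounded nonempty open set, and let φ : ℂⁿ → ℂⁿ be continuously real-differentiable (C¹) on an open neighborhood of closure(Ω), with φ(Ω) ⊆ Ω and φ(closure(Ω)) ⊆ closure(Ω). Set K := φ(∂Ω) ∩ ∂Ω and F := φ⁻¹(K) ∩ closure(Ω), where ∂Ω denotes the topological frontier of Ω. Assume there is an open set U with F ⊆ U such that for every z ∈ U ∩ closure(Ω) the real Fréchet derivative Dφ(z) is complex-linear (i.e. ∂̄φ = 0 on U ∩ closure(Ω)). Then there exists C > 0 such that for every f in the Bergman class A²(Ω), ∫_Ω ‖∂̄(f∘φ)(z)‖² dV(z) ≤ C ∫_Ω |f|² dV. -/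

import Mathlib

open MeasureTheory ENNReal

/-- Lebesgue measure on `ℂⁿ` (the product of the Lebesgue measures on the factors). -/
noncomputable instance EuclideanSpace.measureSpaceComplex {n : ℕ} :
    MeasureSpace (EuclideanSpace ℂ (Fin n)) :=
  ⟨Measure.map (WithLp.toLp 2) (volume : Measure (Fin n → ℂ))⟩

instance {n : ℕ} : BorelSpace (EuclideanSpace ℂ (Fin n)) :=
  inferInstance

/-- `f` belongs to the Bergman class `A²(Ω)`: holomorphic on `Ω` and square-integrable on `Ω`. -/
def BergmanA2 {n : ℕ} (Ω : Set (EuclideanSpace ℂ (Fin n)))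
    (f : EuclideanSpace ℂ (Fin n) → ℂ) : Prop :=
  (∀ z ∈ Ω, DifferentiableAt ℂ f z) ∧
    (∫⁻ z in Ω, (‖f z‖₊ : ℝ≥0∞) ^ 2) < ⊤

/-- The `∂̄`-part (conjugate-linear part) of the real Fréchet derivative of `u` at `z`:
`v ↦ (1/2)(Du(z)(v) + i·Du(z)(i·v))`. -/
noncomputable def dbar {n : ℕ} (u : EuclideanSpace ℂ (Fin n) → ℂ)
    (z : EuclideanSpace ℂ (Fin n)) : EuclideanSpace ℂ (Fin n) →L[ℝ] ℂ :=
  (2⁻¹ : ℂ) • (fderiv ℝ u z +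
    Complex.I • ((fderiv ℝ u z).comp
      (Complex.I • ContinuousLinearMap.id ℝ (EuclideanSpace ℂ (Fin n)))))

/-!
Holomorphic functions satisfy the sub-mean-value inequality `|f(p)|² vol(P) ≤ ∫_P |f|²` on
polydiscs `P` (apply the circle mean value property to `f²` in one variable at a time), so at
points at distance `≥ δ` from `∂Ω` the values, and by the Cauchy estimate the derivatives, of
`f ∈ A²(Ω)` are bounded by a constant depending only on `n` and `δ` times `‖f‖_{A²}`.
By the chain rule `∂̄(f ∘ φ) = f'(φ) ∘ ∂̄φ`, which vanishes on `U`. For `z` in the compact set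
`closure Ω \ U`, the point `φ z` cannot lie on `∂Ω` (it would then lie in `K`, putting `z` in
`F ⊆ U`), so `φ` maps this set into a compact subset of `Ω`, at some distance `δ > 0` from `∂Ω`.
There `|∂̄(f ∘ φ)|² ≤ ‖Dφ‖² |f'(φ)|²` is uniformly bounded by a multiple of `‖f‖²_{A²}`, and
integrating over the bounded set `Ω` gives the estimate.
-/

open Metric Set Real

instance EuclideanSpace.isFiniteMeasureOnCompacts_volume {n : ℕ} :
    IsFiniteMeasureOnCompacts (volume : Measure (EuclideanSpace ℂ (Fin n))) :=
  Measure.IsFiniteMeasureOnCompacts.map volume (EuclideanSpace.equiv (Fin n) ℂ).symm.toHomeomorph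

section AntilinearPart

variable {E F G : Type*} [NormedAddCommGroup E] [NormedSpace ℂ E] [NormedAddCommGroup F]
  [NormedSpace ℂ F] [NormedAddCommGroup G] [NormedSpace ℂ G]

noncomputable def antilinearPart (L : E →L[ℝ] F) : E →L[ℝ] F :=
  (2⁻¹ : ℂ) • (L + Complex.I • L.comp (Complex.I • ContinuousLinearMap.id ℝ E))

theorem antilinearPart_eq_zero {L : E →L[ℝ] F} (hL : ∀ (c : ℂ) (v : E), L (c • v) = c • L v) :
    antilinearPart L = 0 := by
  ext v
  simp [antilinearPart, hL, smul_smul, mul_assoc]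

theorem norm_antilinearPart_le (L : E →L[ℝ] F) : ‖antilinearPart L‖ ≤ ‖L‖ := by
  have hIL : ‖Complex.I • L.comp (Complex.I • ContinuousLinearMap.id ℝ E)‖ ≤ ‖L‖ := by
    rw [norm_smul, Complex.norm_I, one_mul]
    refine (L.opNorm_comp_le _).trans (mul_le_of_le_one_right (norm_nonneg L) ?_)
    rw [norm_smul, Complex.norm_I, one_mul]
    exact ContinuousLinearMap.norm_id_le
  rw [antilinearPart, norm_smul, norm_inv, Complex.norm_ofNat]
  linarith [norm_add_le L (Complex.I • L.comp (Complex.I • ContinuousLinearMap.id ℝ E))]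

theorem antilinearPart_restrictScalars_comp (A : F →L[ℂ] G) (L : E →L[ℝ] F) :
    antilinearPart ((A.restrictScalars ℝ).comp L) =
      (A.restrictScalars ℝ).comp (antilinearPart L) := by
  ext v
  simp [antilinearPart]

end AntilinearPart

section Dbar

variable {n : ℕ} {F : Type*} [NormedAddCommGroup F] [NormedSpace ℂ F] {f : F → ℂ}
  {φ : EuclideanSpace ℂ (Fin n) → F} {z : EuclideanSpace ℂ (Fin n)}

theorem dbar_comp (hf : DifferentiableAt ℂ f (φ z)) (hφ : DifferentiableAt ℝ φ z) :
    dbar (f ∘ φ) z =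
      ((fderiv ℂ f (φ z)).restrictScalars ℝ).comp (antilinearPart (fderiv ℝ φ z)) := by
  rw [← antilinearPart_restrictScalars_comp,
    ← ((hf.hasFDerivAt.restrictScalars ℝ).comp z hφ.hasFDerivAt).fderiv]
  rfl

theorem norm_dbar_comp_le (hf : DifferentiableAt ℂ f (φ z)) (hφ : DifferentiableAt ℝ φ z) :
    ‖dbar (f ∘ φ) z‖ ≤ ‖fderiv ℂ f (φ z)‖ * ‖fderiv ℝ φ z‖ := by
  rw [dbar_comp hf hφ]
  refine (ContinuousLinearMap.opNorm_comp_le _ _).trans ?_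
  rw [ContinuousLinearMap.norm_restrictScalars]
  gcongr
  exact norm_antilinearPart_le _

theorem dbar_comp_eq_zero (hf : DifferentiableAt ℂ f (φ z)) (hφ : DifferentiableAt ℝ φ z)
    (hφz : ∀ (c : ℂ) (v : EuclideanSpace ℂ (Fin n)), fderiv ℝ φ z (c • v) = c • fderiv ℝ φ z v) :
    dbar (f ∘ φ) z = 0 := by
  rw [dbar_comp hf hφ, antilinearPart_eq_zero hφz, ContinuousLinearMap.comp_zero]

end Dbar

theorem two_pi_mul_sq_enorm_le_lintegral_circleMap {f : ℂ → ℂ} {c : ℂ} {s : ℝ} (hs : 0 ≤ s)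
    (hf : DifferentiableOn ℂ f (closedBall c s)) :
    ENNReal.ofReal (2 * π) * ‖f c‖ₑ ^ 2 ≤ ∫⁻ θ in Ioo (-π) π, ‖f (circleMap c s θ)‖ₑ ^ 2 := by
  have hmean : circleAverage (f ^ 2) c s = f c ^ 2 := by
    refine DiffContOnCl.circleAverage ((hf.pow 2).mono ?_).diffContOnCl
    simpa [abs_of_nonneg hs] using closure_ball_subset_closedBall
  have hperiodic : Function.Periodic (fun θ => f (circleMap c s θ) ^ 2) (2 * π) :=
    fun θ => by simp [periodic_circleMap c s θ]
  have hint : ∫ θ in Ioc (-π) π, f (circleMap c s θ) ^ 2 = (2 * π : ℝ) • f c ^ 2 := by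
    rw [← hmean, circleAverage_def, smul_inv_smul₀ (by positivity),
      ← intervalIntegral.integral_of_le (by linarith [pi_pos])]
    simpa [show -π + 2 * π = π by ring] using hperiodic.intervalIntegral_add_eq (-π) 0
  calc ENNReal.ofReal (2 * π) * ‖f c‖ₑ ^ 2
      = ‖∫ θ in Ioc (-π) π, f (circleMap c s θ) ^ 2‖ₑ := by
        rw [hint, enorm_smul, enorm_pow, Real.enorm_of_nonneg (by positivity)]
    _ ≤ ∫⁻ θ in Ioc (-π) π, ‖f (circleMap c s θ) ^ 2‖ₑ := enorm_integral_le_lintegral_enorm _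
    _ = ∫⁻ θ in Ioo (-π) π, ‖f (circleMap c s θ)‖ₑ ^ 2 := by
        simp_rw [enorm_pow]
        exact setLIntegral_congr Ioo_ae_eq_Ioc.symm

theorem setLIntegral_polarCoord_le_setLIntegral_closedBall (g : ℂ → ℝ≥0∞) (c : ℂ) (r : ℝ) :
    ∫⁻ p in Ioc 0 r ×ˢ Ioo (-π) π, ENNReal.ofReal p.1 * g (circleMap c p.1 p.2) ≤
      ∫⁻ z in closedBall c r, g z := by
  set G : ℂ → ℝ≥0∞ := (closedBall c r).indicator g with hG_def
  have hG : ∀ p ∈ Ioc 0 r ×ˢ Ioo (-π) π,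
      ENNReal.ofReal p.1 * g (circleMap c p.1 p.2) =
        ENNReal.ofReal p.1 • G (c + Complex.polarCoord.symm p) := by
    intro p hp
    have hcirc : c + Complex.polarCoord.symm p = circleMap c p.1 p.2 := by
      rw [Complex.polarCoord_symm_apply, circleMap, Complex.exp_mul_I]
      push_cast
      ring
    rw [hcirc, hG_def, indicator_of_mem (closedBall_subset_closedBall hp.1.2
      (circleMap_mem_closedBall c hp.1.1.le p.2)), smul_eq_mul]
  calc ∫⁻ p in Ioc 0 r ×ˢ Ioo (-π) π, ENNReal.ofReal p.1 * g (circleMap c p.1 p.2)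
      = ∫⁻ p in Ioc 0 r ×ˢ Ioo (-π) π, ENNReal.ofReal p.1 • G (c + Complex.polarCoord.symm p) :=
        setLIntegral_congr_fun (measurableSet_Ioc.prod measurableSet_Ioo) hG
    _ ≤ ∫⁻ p in polarCoord.target, ENNReal.ofReal p.1 • G (c + Complex.polarCoord.symm p) :=
        lintegral_mono_set (prod_mono Ioc_subset_Ioi_self subset_rfl)
    _ = ∫⁻ z in closedBall c r, g z := by
        rw [Complex.lintegral_comp_polarCoord_symm (fun z => G (c + z)),
          lintegral_add_left_eq_self, lintegral_indicator measurableSet_closedBall]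

theorem setLIntegral_Ioc_ofReal {r : ℝ} (hr : 0 ≤ r) :
    ∫⁻ s in Ioc 0 r, ENNReal.ofReal s = ENNReal.ofReal (r ^ 2 / 2) := by
  have hint : ∫ s in Ioc 0 r, s = r ^ 2 / 2 := by
    rw [← intervalIntegral.integral_of_le hr, integral_id]
    ring
  rw [← hint]
  exact (ofReal_integral_eq_lintegral_ofReal continuous_id.integrableOn_Ioc
    ((ae_restrict_iff' measurableSet_Ioc).2 (ae_of_all _ fun s hs => hs.1.le))).symm

theorem sq_enorm_mul_volume_closedBall_le {f : ℂ → ℂ} {c : ℂ} {r : ℝ}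
    (hf : DifferentiableOn ℂ f (closedBall c r)) :
    ‖f c‖ₑ ^ 2 * volume (closedBall c r) ≤ ∫⁻ z in closedBall c r, ‖f z‖ₑ ^ 2 := by
  rcases le_or_gt r 0 with hr | hr
  · simp [Complex.volume_closedBall, ENNReal.ofReal_eq_zero.2 hr]
  have hmeas : AEMeasurable (fun p : ℝ × ℝ => ENNReal.ofReal p.1 * ‖f (circleMap c p.1 p.2)‖ₑ ^ 2)
      ((volume.prod volume).restrict (Ioc 0 r ×ˢ Ioo (-π) π)) := by
    have hcont : ContinuousOn (fun p : ℝ × ℝ => f (circleMap c p.1 p.2))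
        (Ioc 0 r ×ˢ Ioo (-π) π) :=
      hf.continuousOn.comp circleMap.continuous.continuousOn fun p hp =>
        closedBall_subset_closedBall hp.1.2 (circleMap_mem_closedBall c hp.1.1.le p.2)
    exact (ENNReal.measurable_ofReal.comp measurable_fst).aemeasurable.mul
      ((hcont.enorm.aemeasurable (measurableSet_Ioc.prod measurableSet_Ioo)).pow_const 2)
  calc ‖f c‖ₑ ^ 2 * volume (closedBall c r)
      = ∫⁻ s in Ioc 0 r, ENNReal.ofReal s * (ENNReal.ofReal (2 * π) * ‖f c‖ₑ ^ 2) := by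
        rw [lintegral_mul_const' _ _ (by finiteness), setLIntegral_Ioc_ofReal hr.le,
          Complex.volume_closedBall, ← ENNReal.ofReal_pow hr.le, ← ENNReal.ofReal_coe_nnreal,
          NNReal.coe_real_pi, mul_comm, ← mul_assoc, ← ENNReal.ofReal_mul (by positivity),
          ← ENNReal.ofReal_mul (by positivity)]
        ring_nf
    _ ≤ ∫⁻ s in Ioc 0 r, ∫⁻ θ in Ioo (-π) π, ENNReal.ofReal s * ‖f (circleMap c s θ)‖ₑ ^ 2 := by
        refine setLIntegral_mono' measurableSet_Ioc fun s hs => ?_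
        rw [lintegral_const_mul' _ _ ENNReal.ofReal_ne_top]
        gcongr
        exact two_pi_mul_sq_enorm_le_lintegral_circleMap hs.1.le
          (hf.mono (closedBall_subset_closedBall hs.2))
    _ = ∫⁻ p in Ioc 0 r ×ˢ Ioo (-π) π, ENNReal.ofReal p.1 * ‖f (circleMap c p.1 p.2)‖ₑ ^ 2 :=
        (setLIntegral_prod _ hmeas).symm
    _ ≤ ∫⁻ z in closedBall c r, ‖f z‖ₑ ^ 2 :=
        setLIntegral_polarCoord_le_setLIntegral_closedBall (fun z => ‖f z‖ₑ ^ 2) c r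

theorem setLIntegral_univ_pi_fin_succ {α : Type*} [MeasureSpace α]
    [SigmaFinite (volume : Measure α)] {n : ℕ} (s : Fin (n + 1) → Set α)
    (g : (Fin (n + 1) → α) → ℝ≥0∞) :
    ∫⁻ z in univ.pi s, g z =
      ∫⁻ q in s 0 ×ˢ univ.pi (fun i => s i.succ), g (Fin.cons q.1 q.2) := by
  set e := MeasurableEquiv.piFinSuccAbove (fun _ : Fin (n + 1) => α) 0
  have he : MeasurePreserving e := volume_preserving_piFinSuccAbove (fun _ : Fin (n + 1) => α) 0
  have he_symm : ∀ q, e.symm q = Fin.cons q.1 q.2 := fun q => Fin.insertNth_zero' q.1 q.2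
  have hpi : univ.pi s = e ⁻¹' (s 0 ×ˢ univ.pi fun i => s i.succ) := by
    ext x
    simp only [mem_univ_pi, mem_preimage, mem_prod, Fin.forall_fin_succ]
    rfl
  rw [hpi, ← he.setLIntegral_comp_preimage_emb e.measurableEmbedding]
  simp_rw [← he_symm, e.symm_apply_apply]

theorem sq_enorm_mul_volume_pi_closedBall_le {n : ℕ} {f : (Fin n → ℂ) → ℂ} {p : Fin n → ℂ}
    {r : Fin n → ℝ} (hr : ∀ i, 0 ≤ r i)
    (hf : DifferentiableOn ℂ f (univ.pi fun i => closedBall (p i) (r i))) :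
    ‖f p‖ₑ ^ 2 * volume (univ.pi fun i => closedBall (p i) (r i)) ≤
      ∫⁻ z in univ.pi fun i => closedBall (p i) (r i), ‖f z‖ₑ ^ 2 := by
  induction n with
  | zero =>
    rw [← setLIntegral_const]
    exact (setLIntegral_congr_fun (MeasurableSet.univ_pi fun _ => measurableSet_closedBall)
      fun z _ => by rw [Subsingleton.elim z p]).le
  | succ n ih =>
    set D := closedBall (p 0) (r 0)
    set P' := univ.pi fun i : Fin n => closedBall (p i.succ) (r i.succ)
    have hcons : ∀ w ∈ D, ∀ y ∈ P', Fin.cons w y ∈ univ.pi fun i => closedBall (p i) (r i) := by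
      intro w hw y hy
      simp only [mem_univ_pi, Fin.forall_fin_succ, Fin.cons_zero, Fin.cons_succ]
      exact ⟨hw, fun i => hy i trivial⟩
    have hmeas : AEMeasurable (fun q : ℂ × (Fin n → ℂ) => ‖f (Fin.cons q.1 q.2)‖ₑ ^ 2)
        ((volume.prod volume).restrict (D ×ˢ P')) := by
      have hcont : Continuous fun q : ℂ × (Fin n → ℂ) => (Fin.cons q.1 q.2 : Fin (n + 1) → ℂ) := by
        fun_prop
      refine ((hf.continuousOn.comp hcont.continuousOn fun q hq => hcons _ hq.1 _ hq.2).enorm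
        |>.aemeasurable ?_).pow_const 2
      exact measurableSet_closedBall.prod (MeasurableSet.univ_pi fun _ => measurableSet_closedBall)
    calc ‖f p‖ₑ ^ 2 * volume (univ.pi fun i => closedBall (p i) (r i))
        = ‖f (Fin.cons (p 0) (Fin.tail p))‖ₑ ^ 2 * volume D * volume P' := by
          rw [volume_pi_pi, volume_pi_pi, Fin.prod_univ_succ, Fin.cons_self_tail, mul_assoc]
      _ ≤ (∫⁻ w in D, ‖f (Fin.cons w (Fin.tail p))‖ₑ ^ 2) * volume P' := by
          gcongr
          refine sq_enorm_mul_volume_closedBall_le (f := fun w => f (Fin.cons w (Fin.tail p))) ?_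
          exact hf.comp (by fun_prop : Differentiable ℂ fun w : ℂ =>
            (Fin.cons w (Fin.tail p) : Fin (n + 1) → ℂ)).differentiableOn
            fun w hw => hcons w hw _ fun i _ => mem_closedBall_self (hr i.succ)
      _ = ∫⁻ w in D, ‖f (Fin.cons w (Fin.tail p))‖ₑ ^ 2 * volume P' :=
          (lintegral_mul_const' _ _
            (isCompact_univ_pi fun _ => isCompact_closedBall _ _).measure_lt_top.ne).symm
      _ ≤ ∫⁻ w in D, ∫⁻ y in P', ‖f (Fin.cons w y)‖ₑ ^ 2 := by
          refine setLIntegral_mono' measurableSet_closedBall fun w hw => ?_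
          exact ih (fun i => hr i.succ) (hf.comp (by fun_prop : Differentiable ℂ
            fun y : Fin n → ℂ => (Fin.cons w y : Fin (n + 1) → ℂ)).differentiableOn
            fun y hy => hcons w hw y hy)
      _ = ∫⁻ z in univ.pi fun i => closedBall (p i) (r i), ‖f z‖ₑ ^ 2 := by
          rw [setLIntegral_univ_pi_fin_succ, Measure.volume_eq_prod, setLIntegral_prod _ hmeas]

theorem EuclideanSpace.preimage_ofLp_pi_closedBall_subset {n : ℕ} (w : EuclideanSpace ℂ (Fin n))
    {δ : ℝ} (hδ : 0 ≤ δ) :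
    WithLp.ofLp ⁻¹' (univ.pi fun i => closedBall (w i) (δ / √(n + 1))) ⊆ closedBall w δ := by
  intro z hz
  have hcoord : ∀ i, dist (z i) (w i) ^ 2 ≤ δ ^ 2 / (n + 1) := fun i => by
    have := pow_le_pow_left₀ dist_nonneg (hz i (mem_univ i)) 2
    rwa [div_pow, Real.sq_sqrt (by positivity)] at this
  rw [mem_closedBall, EuclideanSpace.dist_eq, Real.sqrt_le_left hδ]
  calc ∑ i, dist (z i) (w i) ^ 2 ≤ ∑ _i : Fin n, δ ^ 2 / (n + 1) :=
        Finset.sum_le_sum fun i _ => hcoord i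
    _ = n / (n + 1) * δ ^ 2 := by
        rw [Finset.sum_const, Finset.card_univ, Fintype.card_fin, nsmul_eq_mul]
        ring
    _ ≤ δ ^ 2 :=
        mul_le_of_le_one_left (by positivity) ((div_le_one (by positivity)).2 (by linarith))

theorem sq_enorm_mul_le_setLIntegral_of_closedBall_subset {n : ℕ}
    {f : EuclideanSpace ℂ (Fin n) → ℂ} {Ω : Set (EuclideanSpace ℂ (Fin n))}
    {w : EuclideanSpace ℂ (Fin n)} {δ : ℝ} (hδ : 0 ≤ δ) (hΩ : closedBall w δ ⊆ Ω)
    (hf : DifferentiableOn ℂ f Ω) :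
    ‖f w‖ₑ ^ 2 * ENNReal.ofReal (π * δ ^ 2 / (n + 1)) ^ n ≤ ∫⁻ z in Ω, ‖f z‖ₑ ^ 2 := by
  set P : Set (Fin n → ℂ) := univ.pi fun i => closedBall (w i) (δ / √(n + 1))
  have hP : WithLp.ofLp ⁻¹' P ⊆ Ω :=
    (EuclideanSpace.preimage_ofLp_pi_closedBall_subset w hδ).trans hΩ
  have hvol : volume P = ENNReal.ofReal (π * δ ^ 2 / (n + 1)) ^ n := by
    rw [volume_pi_pi]
    simp_rw [Complex.volume_closedBall]
    rw [Finset.prod_const, Finset.card_univ, Fintype.card_fin,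
      ← ENNReal.ofReal_pow (by positivity), ← ENNReal.ofReal_coe_nnreal, NNReal.coe_real_pi,
      ← ENNReal.ofReal_mul (by positivity), div_pow, Real.sq_sqrt (by positivity)]
    ring_nf
  have htoLp : MeasurePreserving (WithLp.toLp 2 : (Fin n → ℂ) → EuclideanSpace ℂ (Fin n)) :=
    ⟨(MeasurableEquiv.toLp 2 _).measurable, rfl⟩
  calc ‖f w‖ₑ ^ 2 * ENNReal.ofReal (π * δ ^ 2 / (n + 1)) ^ n
      ≤ ∫⁻ x in P, ‖f (WithLp.toLp 2 x)‖ₑ ^ 2 := by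
        rw [← hvol]
        refine sq_enorm_mul_volume_pi_closedBall_le (f := fun x => f (WithLp.toLp 2 x))
          (fun _ => by positivity) ?_
        exact hf.comp (EuclideanSpace.equiv (Fin n) ℂ).symm.differentiable.differentiableOn
          fun x hx => hP hx
    _ = ∫⁻ z in WithLp.ofLp ⁻¹' P, ‖f z‖ₑ ^ 2 :=
        htoLp.setLIntegral_comp_preimage_emb (MeasurableEquiv.toLp 2 _).measurableEmbedding
          (fun z => ‖f z‖ₑ ^ 2) (WithLp.ofLp ⁻¹' P)
    _ ≤ ∫⁻ z in Ω, ‖f z‖ₑ ^ 2 := lintegral_mono_set hP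

theorem norm_fderiv_le_of_forall_mem_ball_norm_le {E F : Type*} [NormedAddCommGroup E]
    [NormedSpace ℂ E] [NormedAddCommGroup F] [NormedSpace ℂ F] {f : E → F} {c : E} {ρ M : ℝ}
    (hρ : 0 < ρ) (hf : DifferentiableOn ℂ f (ball c ρ)) (hM : ∀ z ∈ ball c ρ, ‖f z‖ ≤ M) :
    ‖fderiv ℂ f c‖ ≤ 2 * M / ρ := by
  refine Complex.norm_fderiv_le_div_of_mapsTo_ball hf (fun z hz => ?_) hρ
  rw [mem_closedBall, dist_eq_norm]
  linarith [norm_sub_le (f z) (f c), hM z hz, hM c (mem_ball_self hρ)]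

/-- `(4 / δ)²` from the Cauchy estimate on a ball of radius `δ / 2`, over the volume of a
polydisc contained in such a ball. -/
noncomputable def bergmanFDerivConst (n : ℕ) (δ : ℝ) : ℝ≥0∞ :=
  ENNReal.ofReal (16 / δ ^ 2) * (ENNReal.ofReal (π * (δ / 2) ^ 2 / (n + 1)) ^ n)⁻¹

theorem bergmanFDerivConst_ne_top (n : ℕ) {δ : ℝ} (hδ : 0 < δ) : bergmanFDerivConst n δ ≠ ⊤ :=
  ENNReal.mul_ne_top ENNReal.ofReal_ne_top
    (ENNReal.inv_ne_top.2 (pow_ne_zero _ (ENNReal.ofReal_pos.2 (by positivity)).ne'))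

theorem enorm_fderiv_sq_le_of_closedBall_subset {n : ℕ}
    {f : EuclideanSpace ℂ (Fin n) → ℂ} {Ω : Set (EuclideanSpace ℂ (Fin n))}
    {w : EuclideanSpace ℂ (Fin n)} {δ : ℝ} (hδ : 0 < δ) (hΩ : closedBall w δ ⊆ Ω)
    (hf : DifferentiableOn ℂ f Ω) :
    ‖fderiv ℂ f w‖ₑ ^ 2 ≤ bergmanFDerivConst n δ * ∫⁻ z in Ω, ‖f z‖ₑ ^ 2 := by
  rw [bergmanFDerivConst, mul_assoc]
  set M := (ENNReal.ofReal (π * (δ / 2) ^ 2 / (n + 1)) ^ n)⁻¹ * ∫⁻ z in Ω, ‖f z‖ₑ ^ 2 with hM_def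
  rcases eq_or_ne M ⊤ with hM | hM
  · rw [hM, ENNReal.mul_top (ENNReal.ofReal_pos.2 (by positivity)).ne']
    exact le_top
  have hval : ∀ z ∈ ball w (δ / 2), ‖f z‖ ≤ √M.toReal := by
    intro z hz
    have hsub : closedBall z (δ / 2) ⊆ Ω := by
      refine (closedBall_subset_closedBall' ?_).trans hΩ
      linarith [mem_ball.1 hz]
    have hsq : ‖f z‖ₑ ^ 2 ≤ M := by
      rw [hM_def, ← ENNReal.div_eq_inv_mul, ENNReal.le_div_iff_mul_le
        (Or.inl (pow_ne_zero _ (ENNReal.ofReal_pos.2 (by positivity)).ne')) (Or.inl (by simp))]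
      exact sq_enorm_mul_le_setLIntegral_of_closedBall_subset (by positivity) hsub hf
    refine Real.le_sqrt_of_sq_le ?_
    simpa using ENNReal.toReal_mono hM hsq
  have hcauchy := norm_fderiv_le_of_forall_mem_ball_norm_le (by positivity)
    (hf.mono (ball_subset_closedBall.trans ((closedBall_subset_closedBall (by linarith)).trans hΩ)))
    hval
  calc ‖fderiv ℂ f w‖ₑ ^ 2 = ENNReal.ofReal (‖fderiv ℂ f w‖ ^ 2) := by
        rw [ENNReal.ofReal_pow (norm_nonneg _), ofReal_norm]
    _ ≤ ENNReal.ofReal ((2 * √M.toReal / (δ / 2)) ^ 2) := by gcongr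
    _ = ENNReal.ofReal (16 / δ ^ 2 * M.toReal) := by
        rw [div_pow, mul_pow, Real.sq_sqrt ENNReal.toReal_nonneg]
        ring_nf
    _ = ENNReal.ofReal (16 / δ ^ 2) * M := by
        rw [ENNReal.ofReal_mul (by positivity), ENNReal.ofReal_toReal hM]

theorem enorm_dbar_comp_sq_le {n m : ℕ} {Ω : Set (EuclideanSpace ℂ (Fin m))}
    {f : EuclideanSpace ℂ (Fin m) → ℂ} {φ : EuclideanSpace ℂ (Fin n) → EuclideanSpace ℂ (Fin m)}
    {z : EuclideanSpace ℂ (Fin n)} {δ B : ℝ} (hδ : 0 < δ) (hΩ : closedBall (φ z) δ ⊆ Ω)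
    (hf : DifferentiableOn ℂ f Ω) (hφ : DifferentiableAt ℝ φ z) (hB : ‖fderiv ℝ φ z‖ ≤ B) :
    ‖dbar (f ∘ φ) z‖ₑ ^ 2 ≤
      ENNReal.ofReal (B ^ 2) * bergmanFDerivConst m δ * ∫⁻ w in Ω, ‖f w‖ₑ ^ 2 := by
  have hfφ : DifferentiableAt ℂ f (φ z) :=
    hf.differentiableAt
      (Filter.mem_of_superset (ball_mem_nhds _ hδ) (ball_subset_closedBall.trans hΩ))
  have hnorm : ‖dbar (f ∘ φ) z‖ ≤ B * ‖fderiv ℂ f (φ z)‖ :=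
    (norm_dbar_comp_le hfφ hφ).trans_eq (mul_comm _ _) |>.trans
      (mul_le_mul_of_nonneg_right hB (norm_nonneg _))
  calc ‖dbar (f ∘ φ) z‖ₑ ^ 2 = ENNReal.ofReal (‖dbar (f ∘ φ) z‖ ^ 2) := by
        rw [ENNReal.ofReal_pow (norm_nonneg _), ofReal_norm]
    _ ≤ ENNReal.ofReal (B ^ 2) * ‖fderiv ℂ f (φ z)‖ₑ ^ 2 := by
        rw [← ofReal_norm, ← ENNReal.ofReal_pow (norm_nonneg _),
          ← ENNReal.ofReal_mul (sq_nonneg B), ← mul_pow]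
        gcongr
    _ ≤ ENNReal.ofReal (B ^ 2) * bergmanFDerivConst m δ * ∫⁻ w in Ω, ‖f w‖ₑ ^ 2 := by
        rw [mul_assoc]
        gcongr
        exact enorm_fderiv_sq_le_of_closedBall_subset hδ hΩ hf

theorem mapsTo_closure_diff {X : Type*} [TopologicalSpace X] {Ω U : Set X} {φ : X → X}
    (hΩ : IsOpen Ω) (hφ : MapsTo φ Ω Ω) (hφcl : MapsTo φ (closure Ω) (closure Ω))
    (hU : φ ⁻¹' (φ '' frontier Ω ∩ frontier Ω) ∩ closure Ω ⊆ U) :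
    MapsTo φ (closure Ω \ U) Ω := by
  rintro z ⟨hzcl, hzU⟩
  by_cases hzΩ : z ∈ Ω
  · exact hφ hzΩ
  by_contra hφz
  have hfrontier : ∀ {x}, x ∈ closure Ω → x ∉ Ω → x ∈ frontier Ω := fun hx hx' => by
    rw [hΩ.frontier_eq]
    exact ⟨hx, hx'⟩
  exact hzU (hU ⟨⟨mem_image_of_mem φ (hfrontier hzcl hzΩ), hfrontier (hφcl hzcl) hφz⟩, hzcl⟩)

theorem IsCompact.exists_forall_closedBall_subset_of_mapsTo {X Y : Type*} [TopologicalSpace X]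
    [PseudoMetricSpace Y] {K : Set X} {Ω : Set Y} {φ : X → Y} (hK : IsCompact K)
    (hφ : ContinuousOn φ K) (hΩ : IsOpen Ω) (hKΩ : MapsTo φ K Ω) :
    ∃ δ > 0, ∀ z ∈ K, closedBall (φ z) δ ⊆ Ω := by
  obtain ⟨δ, hδ, hthick⟩ := (hK.image_of_continuousOn hφ).exists_cthickening_subset_open hΩ
    hKΩ.image_subset
  exact ⟨δ, hδ, fun z hz => (closedBall_subset_cthickening (mem_image_of_mem φ hz) δ).trans hthick⟩

theorem projected_composition_stmt5_general
    (n : ℕ)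
    (Ω : Set (EuclideanSpace ℂ (Fin n)))
    (hΩo : IsOpen Ω) (hΩb : Bornology.IsBounded Ω)
    (φ : EuclideanSpace ℂ (Fin n) → EuclideanSpace ℂ (Fin n))
    (hφC1 : ∃ W : Set (EuclideanSpace ℂ (Fin n)),
      IsOpen W ∧ closure Ω ⊆ W ∧ ContDiffOn ℝ 1 φ W)
    (hφ : Set.MapsTo φ Ω Ω) (hφcl : Set.MapsTo φ (closure Ω) (closure Ω))
    (K F : Set (EuclideanSpace ℂ (Fin n)))
    (hK : K = φ '' frontier Ω ∩ frontier Ω)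
    (hF : F = φ ⁻¹' K ∩ closure Ω)
    (U : Set (EuclideanSpace ℂ (Fin n))) (hUo : IsOpen U) (hFU : F ⊆ U)
    (hCR : ∀ z ∈ U ∩ closure Ω, ∀ (c : ℂ) (v : EuclideanSpace ℂ (Fin n)),
      fderiv ℝ φ z (c • v) = c • fderiv ℝ φ z v) :
    ∃ C : ℝ, 0 < C ∧ ∀ f : EuclideanSpace ℂ (Fin n) → ℂ, BergmanA2 Ω f →
      (∫⁻ z in Ω, (‖dbar (f ∘ φ) z‖₊ : ℝ≥0∞) ^ 2) ≤
        ENNReal.ofReal C * ∫⁻ z in Ω, (‖f z‖₊ : ℝ≥0∞) ^ 2 := by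
  subst hK hF
  obtain ⟨W, hWo, hΩW, hφW⟩ := hφC1
  have hcompact : IsCompact (closure Ω) := hΩb.isCompact_closure
  obtain ⟨δ, hδ, hball⟩ := (hcompact.diff hUo).exists_forall_closedBall_subset_of_mapsTo
    (hφW.continuousOn.mono (sdiff_subset.trans hΩW)) hΩo (mapsTo_closure_diff hΩo hφ hφcl hFU)
  obtain ⟨B, hB⟩ := hcompact.exists_bound_of_continuousOn
    ((hφW.continuousOn_fderiv_of_isOpen hWo le_rfl).mono hΩW)
  set κ := ENNReal.ofReal (B ^ 2) * bergmanFDerivConst n δ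
  have hκ : κ * volume Ω ≠ ⊤ := ENNReal.mul_ne_top (ENNReal.mul_ne_top ENNReal.ofReal_ne_top
    (bergmanFDerivConst_ne_top n hδ)) hΩb.measure_lt_top.ne
  refine ⟨(κ * volume Ω).toReal + 1, by positivity, fun f hf => ?_⟩
  have hpointwise : ∀ z ∈ Ω, ‖dbar (f ∘ φ) z‖ₑ ^ 2 ≤ κ * ∫⁻ z in Ω, ‖f z‖ₑ ^ 2 := by
    intro z hz
    have hφz : DifferentiableAt ℝ φ z :=
      (hφW.differentiableOn one_ne_zero).differentiableAt (hWo.mem_nhds (hΩW (subset_closure hz)))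
    by_cases hzU : z ∈ U
    · rw [dbar_comp_eq_zero (hf.1 _ (hφ hz)) hφz (hCR z ⟨hzU, subset_closure hz⟩),
        enorm_eq_nnnorm, nnnorm_zero]
      simp
    · exact enorm_dbar_comp_sq_le hδ (hball z ⟨subset_closure hz, hzU⟩)
        (fun w hw => (hf.1 w hw).differentiableWithinAt) hφz (hB z (subset_closure hz))
  simp only [← enorm_eq_nnnorm]
  calc ∫⁻ z in Ω, ‖dbar (f ∘ φ) z‖ₑ ^ 2 ≤ ∫⁻ _ in Ω, κ * ∫⁻ z in Ω, ‖f z‖ₑ ^ 2 :=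
        setLIntegral_mono' hΩo.measurableSet hpointwise
    _ = κ * volume Ω * ∫⁻ z in Ω, ‖f z‖ₑ ^ 2 := by rw [setLIntegral_const]; ring
    _ ≤ ENNReal.ofReal ((κ * volume Ω).toReal + 1) * ∫⁻ z in Ω, ‖f z‖ₑ ^ 2 := by
        gcongr
        exact (ENNReal.le_ofReal_iff_toReal_le hκ (by positivity)).2 (by linarith)

/-- The main analytic estimate in the proof of Theorem 1: if `φ` is `C¹` up to the boundary and
`∂̄φ = 0` on a neighborhood (in `closure Ω`) of `F = φ⁻¹(φ(∂Ω) ∩ ∂Ω) ∩ closure Ω`, then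
`∫_Ω ‖∂̄(f∘φ)‖² dV ≤ C ∫_Ω |f|² dV` for all `f ∈ A²(Ω)`. -/
theorem projected_composition_stmt5
    (n : ℕ) (hn : 1 ≤ n)
    (Ω : Set (EuclideanSpace ℂ (Fin n)))
    (hΩo : IsOpen Ω) (hΩne : Ω.Nonempty) (hΩb : Bornology.IsBounded Ω)
    (φ : EuclideanSpace ℂ (Fin n) → EuclideanSpace ℂ (Fin n))
    (hφC1 : ∃ W : Set (EuclideanSpace ℂ (Fin n)),
      IsOpen W ∧ closure Ω ⊆ W ∧ ContDiffOn ℝ 1 φ W)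
    (hφ : Set.MapsTo φ Ω Ω) (hφcl : Set.MapsTo φ (closure Ω) (closure Ω))
    (K F : Set (EuclideanSpace ℂ (Fin n)))
    (hK : K = φ '' frontier Ω ∩ frontier Ω)
    (hF : F = φ ⁻¹' K ∩ closure Ω)
    (U : Set (EuclideanSpace ℂ (Fin n))) (hUo : IsOpen U) (hFU : F ⊆ U)
    (hCR : ∀ z ∈ U ∩ closure Ω, ∀ (c : ℂ) (v : EuclideanSpace ℂ (Fin n)),
      fderiv ℝ φ z (c • v) = c • fderiv ℝ φ z v) :
    ∃ C : ℝ, 0 < C ∧ ∀ f : EuclideanSpace ℂ (Fin n) → ℂ, BergmanA2 Ω f →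
      (∫⁻ z in Ω, (‖dbar (f ∘ φ) z‖₊ : ℝ≥0∞) ^ 2) ≤
        ENNReal.ofReal C * ∫⁻ z in Ω, (‖f z‖₊ : ℝ≥0∞) ^ 2 :=
  projected_composition_stmt5_general n Ω hΩo hΩb φ hφC1 hφ hφcl K F hK hF U hUo hFU hCR
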